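/- arXiv:1708.06268 — 3 statements merged into one kernel-verified Lean document; each statement's English description precedes it below -/
import Mathlib

section
/- Let 1/2 ≤ ρ < 1, K = ⌈ρ/(1-ρ)⌉ - 1, and LG > 0. Define p(s) = -ρ·LG + Σ_{k=1}^{K+1} (1 - k(1-ρ)) s^k. Then p has exactly one root in the interval [0, ∞). -/
theorem stmt1 (ρ LG : ℝ) (hρ : 1/2 ≤ ρ) (hρ1 : ρ < 1) (hLG : 0 < LG)
    (K : ℕ) (hK : (K : ℤ) = ⌈ρ/(1-ρ)⌉ - 1) :
    ∃! s : ℝ, 0 ≤ s ∧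
      -ρ * LG + ∑ k ∈ Finset.Icc 1 (K+1), (1 - (k : ℝ) * (1 - ρ)) * s ^ k = 0 := by
  have h1ρ : 0 < 1 - ρ := by linarith
  set f : ℝ → ℝ := fun s => -ρ * LG + ∑ k ∈ Finset.Icc 1 (K+1), (1 - (k : ℝ) * (1 - ρ)) * s ^ k
    with hf
  -- coefficients positive
  have hK1 : ((K : ℝ) + 1) < 1 / (1 - ρ) := by
    have hceil : ((⌈ρ/(1-ρ)⌉ : ℤ) : ℝ) < ρ/(1-ρ) + 1 := by
      exact_mod_cast Int.ceil_lt_add_one (ρ/(1-ρ))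
    have : ((K : ℝ)) = ((⌈ρ/(1-ρ)⌉ : ℤ) : ℝ) - 1 := by exact_mod_cast hK
    have hd : ρ/(1-ρ) + 1 = 1/(1-ρ) := by field_simp; ring
    linarith
  have hc : ∀ k ∈ Finset.Icc 1 (K+1), 0 < 1 - (k : ℝ) * (1 - ρ) := by
    intro k hk
    simp only [Finset.mem_Icc] at hk
    have hk2 : (k : ℝ) ≤ (K : ℝ) + 1 := by exact_mod_cast hk.2
    have : (k : ℝ) * (1 - ρ) < (1/(1-ρ)) * (1 - ρ) := by
      apply mul_lt_mul_of_pos_right _ h1ρ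
      linarith
    rw [one_div, inv_mul_cancel₀ (ne_of_gt h1ρ)] at this
    linarith
  have h1mem : 1 ∈ Finset.Icc 1 (K+1) := Finset.mem_Icc.2 ⟨le_refl 1, Nat.le_add_left 1 K⟩
  -- strict monotonicity on [0,∞)
  have hmono : StrictMonoOn f (Set.Ici 0) := by
    intro a ha b hb hab
    simp only [hf]
    have hsum : ∑ k ∈ Finset.Icc 1 (K+1), (1 - (k : ℝ) * (1 - ρ)) * a ^ k
        < ∑ k ∈ Finset.Icc 1 (K+1), (1 - (k : ℝ) * (1 - ρ)) * b ^ k := by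
      apply Finset.sum_lt_sum
      · intro k hk
        exact mul_le_mul_of_nonneg_left (pow_le_pow_left₀ ha hab.le k) (hc k hk).le
      · refine ⟨1, h1mem, ?_⟩
        simpa using mul_lt_mul_of_pos_left hab (hc 1 h1mem)
    linarith
  -- f 0 < 0
  have hf0 : f 0 < 0 := by
    have : ∑ k ∈ Finset.Icc 1 (K+1), (1 - (k : ℝ) * (1 - ρ)) * (0:ℝ) ^ k = 0 := by
      apply Finset.sum_eq_zero
      intro k hk
      simp only [Finset.mem_Icc] at hk
      rw [zero_pow (by omega : k ≠ 0), mul_zero]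
    simp only [hf, this]
    nlinarith
  -- f LG ≥ 0
  have hfLG : 0 ≤ f LG := by
    have hsingle := Finset.single_le_sum
      (f := fun k : ℕ => (1 - (k : ℝ) * (1 - ρ)) * LG ^ k)
      (fun k hk => mul_nonneg (hc k hk).le (pow_nonneg hLG.le k)) h1mem
    simp only [Nat.cast_one, pow_one] at hsingle
    simp only [hf]
    nlinarith
  -- continuity
  have hcont : Continuous f := by
    apply Continuous.add continuous_const
    exact continuous_finset_sum _ (fun k _ => continuous_const.mul (continuous_pow k))
  -- IVT
  obtain ⟨s, hs, hfs⟩ : ∃ s ∈ Set.Icc (0:ℝ) LG, f s = 0 := by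
    have := intermediate_value_Icc hLG.le hcont.continuousOn (a := 0) (b := LG)
    have h0 : (0:ℝ) ∈ Set.Icc (f 0) (f LG) := ⟨hf0.le, hfLG⟩
    obtain ⟨s, hs, hfs⟩ := this h0
    exact ⟨s, hs, hfs⟩
  refine ⟨s, ⟨hs.1, hfs⟩, ?_⟩
  rintro t ⟨ht, hft⟩
  have hft' : f t = 0 := hft
  exact hmono.injOn ht hs.1 (by rw [hft', hfs])
end

section
/- For snr > 0 and LG > 0, the function f(p) = log₂(1 + p·snr / (1 + p·LG + p²·LG·snr)) on (0,1] attains its maximum at p* = min{1, 1/√(LG·snr)}; in particular, if LG·snr ≥ 1 then the maximizer is p* = 1/√(LG·snr) and f(p*) = log₂(1 + snr/(LG + 2√(LG·snr))). -/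
theorem stmt13 (snr LG : ℝ) (hs : 0 < snr) (hl : 0 < LG) :
    IsMaxOn (fun p : ℝ => Real.logb 2 (1 + p*snr / (1 + p*LG + p^2*LG*snr)))
      (Set.Ioc 0 1) (min 1 (1 / Real.sqrt (LG*snr))) ∧
    (1 ≤ LG*snr →
      min 1 (1 / Real.sqrt (LG*snr)) = 1 / Real.sqrt (LG*snr) ∧
      Real.logb 2 (1 + (1 / Real.sqrt (LG*snr))*snr /
          (1 + (1 / Real.sqrt (LG*snr))*LG + (1 / Real.sqrt (LG*snr))^2*LG*snr))
        = Real.logb 2 (1 + snr / (LG + 2*Real.sqrt (LG*snr)))) := by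
  have ha : 0 < LG * snr := mul_pos hl hs
  have hsq : 0 < Real.sqrt (LG * snr) := Real.sqrt_pos.mpr ha
  have hsqa : (Real.sqrt (LG * snr)) ^ 2 = LG * snr := Real.sq_sqrt ha.le
  set s := Real.sqrt (LG * snr) with hs'
  set q := min 1 (1 / s) with hqdef
  have hq0 : 0 < q := lt_min one_pos (by positivity)
  have hq1 : q ≤ 1 := min_le_left _ _
  have hqs : q ≤ 1 / s := min_le_right _ _
  constructor
  · intro p hp
    obtain ⟨hp0, hp1⟩ := hp
    have hdp : 0 < 1 + p * LG + p ^ 2 * LG * snr := by positivity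
    have hdq : 0 < 1 + q * LG + q ^ 2 * LG * snr := by positivity
    have key : p * snr / (1 + p * LG + p ^ 2 * LG * snr)
        ≤ q * snr / (1 + q * LG + q ^ 2 * LG * snr) := by
      rw [div_le_div_iff₀ hdp hdq]
      have h : (p - q) * (1 - p * q * (LG * snr)) * snr ≤ 0 := by
        rcases le_total p q with h1 | h1
        · have hpa : p * q * (LG * snr) ≤ 1 := by
            have h2 : p ≤ 1 / s := h1.trans hqs
            have hpq : p * q ≤ 1 / s * (1 / s) :=
              mul_le_mul h2 hqs hq0.le (by positivity)
            have hinv : 1 / s * (1 / s) * (LG * snr) = 1 := by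
              field_simp; nlinarith
            nlinarith [mul_le_mul_of_nonneg_right hpq ha.le]
          nlinarith [mul_nonneg (mul_nonneg (sub_nonneg.2 h1) (sub_nonneg.2 hpa)) hs.le]
        · rcases lt_or_ge q 1 with h2 | h2
          · have hq' : q = 1 / s := by
              rcases min_cases 1 (1 / s) with ⟨e, _⟩ | ⟨e, _⟩
              · exfalso; rw [hqdef, e] at h2; exact lt_irrefl 1 h2
              · rw [hqdef, e]
            have hqq : q * q * (LG * snr) = 1 := by
              rw [hq']; field_simp; nlinarith
            have hge : 1 ≤ p * q * (LG * snr) := by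
              nlinarith [mul_nonneg (mul_nonneg (sub_nonneg.2 h1) hq0.le) ha.le]
            nlinarith [mul_nonneg (mul_nonneg (sub_nonneg.2 h1) (sub_nonneg.2 hge)) hs.le]
          · have hpq : p = q := le_antisymm (hp1.trans h2) h1
            simp [hpq]
      nlinarith
    have hargp : 0 < 1 + p * snr / (1 + p * LG + p ^ 2 * LG * snr) := by positivity
    simp only
    exact Real.logb_le_logb_of_le one_lt_two hargp (by linarith)
  · intro h1
    have hs1 : 1 ≤ s := Real.one_le_sqrt.mpr h1
    have hmin : q = 1 / s := min_eq_right (by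
      rw [div_le_one (by linarith)]; exact hs1)
    refine ⟨hmin, ?_⟩
    congr 1
    have hsne : s ≠ 0 := by positivity
    have hd : LG + 2 * s > 0 := by positivity
    have harg : (1 / s) ^ 2 * LG * snr = 1 := by
      field_simp; nlinarith
    rw [harg]
    field_simp
    ring
end

section
/- Let N > P ≥ 1, g_α ≥ 0, θ₀, φ₀ ∈ ℝ, and let T^{-1} = I_N - √(g_α)e^{-iθ₀}S with S as before (S[n,n-P] = e^{-inφ₀} for P ≤ n ≤ N-1, zero elsewhere). Then the diagonal entries of (TᴴT)^{-1} = T^{-1}(T^{-1})ᴴ satisfy: [(TᴴT)^{-1}]_{n,n} = 1 for 0 ≤ n ≤ P-1 and [(TᴴT)^{-1}]_{n,n} = 1 + g_α for P ≤ n ≤ N-1. -/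
theorem stmt17 (N P : ℕ) (hP : 1 ≤ P) (hN : P < N) (gα : ℝ) (hg : 0 ≤ gα) (θ₀ φ₀ : ℝ)
    (T S : Matrix (Fin N) (Fin N) ℂ)
    (hS : ∀ n m : Fin N, S n m =
      if P ≤ (n : ℕ) ∧ (m : ℕ) = (n : ℕ) - P
      then Complex.exp (-Complex.I * (((n : ℕ) : ℝ) * φ₀)) else 0)
    (hT1 : T * (1 - ((Real.sqrt gα : ℂ) * Complex.exp (-Complex.I * (θ₀ : ℂ))) • S) = 1)
    (hT2 : (1 - ((Real.sqrt gα : ℂ) * Complex.exp (-Complex.I * (θ₀ : ℂ))) • S) * T = 1) :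
    ∀ n : Fin N,
      (T.conjTranspose * T)⁻¹ n n = if (n : ℕ) < P then 1 else ((1 + gα : ℝ) : ℂ) := by
  set c : ℂ := (Real.sqrt gα : ℂ) * Complex.exp (-Complex.I * (θ₀ : ℂ)) with hc
  set A : Matrix (Fin N) (Fin N) ℂ := 1 - c • S with hA
  have hTinv : T⁻¹ = A := Matrix.inv_eq_right_inv hT1
  have hkey : (T.conjTranspose * T)⁻¹ = A * A.conjTranspose := by
    rw [Matrix.mul_inv_rev, ← Matrix.conjTranspose_nonsing_inv, hTinv]
  have hcc : c * (starRingEnd ℂ) c = (gα : ℂ) := by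
    rw [hc, map_mul, Complex.conj_ofReal, ← Complex.exp_conj]
    have h3 : (starRingEnd ℂ) (-Complex.I * (θ₀ : ℂ)) = Complex.I * (θ₀ : ℂ) := by
      simp [Complex.conj_ofReal]
    rw [h3, mul_mul_mul_comm, ← Complex.exp_add, ← Complex.ofReal_mul,
      Real.mul_self_sqrt hg,
      show -Complex.I * (θ₀ : ℂ) + Complex.I * (θ₀ : ℂ) = 0 by ring,
      Complex.exp_zero, mul_one]
  have hee : ∀ x : ℝ, Complex.exp (-Complex.I * (x : ℂ)) *
      (starRingEnd ℂ) (Complex.exp (-Complex.I * (x : ℂ))) = 1 := by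
    intro x
    rw [← Complex.exp_conj]
    have h3 : (starRingEnd ℂ) (-Complex.I * (x : ℂ)) = Complex.I * (x : ℂ) := by
      simp [Complex.conj_ofReal]
    rw [h3, ← Complex.exp_add,
      show -Complex.I * (x : ℂ) + Complex.I * (x : ℂ) = 0 by ring, Complex.exp_zero]
  intro n
  rw [hkey, Matrix.mul_apply]
  by_cases hn : P ≤ (n : ℕ)
  · -- n ≥ P
    set m₀ : Fin N := ⟨(n : ℕ) - P, by omega⟩ with hm₀
    have hnm₀ : n ≠ m₀ := by
      intro h
      have := congrArg Fin.val h
      simp [hm₀] at this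
      omega
    have hterm : ∀ m : Fin N, A n m * A.conjTranspose m n
        = (if m = n then 1 else 0) + (if m = m₀ then (gα : ℂ) else 0) := by
      intro m
      have hAnm : A n m = (if n = m then 1 else 0) - c * S n m := by
        simp [hA, Matrix.one_apply, Matrix.sub_apply, Matrix.smul_apply]
      rw [Matrix.conjTranspose_apply, hAnm, hS]
      by_cases h1 : m = n
      · subst h1
        have h4 : ¬ ((m : ℕ) = (m : ℕ) - P) := by omega
        simp [h4, hn, hnm₀]
      · by_cases h2 : m = m₀
        · have hval : (m : ℕ) = (n : ℕ) - P := by rw [h2]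
          rw [if_neg (Ne.symm h1), if_pos ⟨hn, hval⟩, zero_sub]
          simp only [star_neg, star_mul', neg_mul_neg, Complex.star_def]
          have h6 := hee (((n : ℕ) : ℝ) * φ₀)
          rw [Complex.ofReal_mul] at h6
          rw [mul_mul_mul_comm, hcc, h6, mul_one]
          simp [h1, h2, Ne.symm hnm₀]
        · have h4 : ¬ ((m : ℕ) = (n : ℕ) - P) := by
            intro h; exact h2 (Fin.ext h)
          simp [h4, Ne.symm h1, h1, h2]
    rw [Finset.sum_congr rfl (fun m _ => hterm m)]
    rw [Finset.sum_add_distrib, Finset.sum_ite_eq', Finset.sum_ite_eq']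
    have h5 : ¬ ((n : ℕ) < P) := by omega
    simp [h5, Complex.ofReal_add]
  · -- n < P
    have hterm : ∀ m : Fin N, A n m * A.conjTranspose m n = (if m = n then 1 else 0) := by
      intro m
      have hS0 : S n m = 0 := by rw [hS]; simp [hn]
      have hAnm : A n m = (if n = m then 1 else 0) := by
        simp [hA, Matrix.one_apply, Matrix.sub_apply, Matrix.smul_apply, hS0]
      rw [Matrix.conjTranspose_apply, hAnm]
      by_cases h1 : m = n
      · subst h1; simp
      · simp [h1, Ne.symm h1]
    rw [Finset.sum_congr rfl (fun m _ => hterm m)]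
    rw [Finset.sum_ite_eq']
    simp [Nat.lt_of_not_le hn]
end
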